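/- For all integers n, k with 0 < k ≤ n and n ≥ k+2, the number T_{n,k} of labeled partial k-trees on the vertex set {1,…,n} satisfies T_{n,k} ≤ (k · 2^k · n)^n · 2^{−k(k+1)/2} · k^{−k}. -/

import Mathlib

/-- The graph on `Fin (m+1)` obtained from a graph `G` on `Fin m` by adding a new
vertex (the last one) adjacent exactly to the vertices of `S`. -/
def extendGraph {m : ℕ} (G : SimpleGraph (Fin m)) (S : Finset (Fin m)) :
    SimpleGraph (Fin (m + 1)) :=
  SimpleGraph.fromRel fun a b =>
    (∃ a' b' : Fin m, a = Fin.castSucc a' ∧ b = Fin.castSucc b' ∧ G.Adj a' b') ∨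
    (a = Fin.last m ∧ ∃ b' ∈ S, b = Fin.castSucc b')

/-- Graphs produced by the `k`-tree construction process: start from a complete graph on
`k+1` vertices, and iteratively add a new vertex adjacent to exactly `k` existing vertices
that form a clique. -/
inductive IsKTreeConstr (k : ℕ) : (m : ℕ) → SimpleGraph (Fin m) → Prop
  | base : IsKTreeConstr k (k + 1) ⊤
  | step {m : ℕ} {G : SimpleGraph (Fin m)} (hG : IsKTreeConstr k m G)
      (S : Finset (Fin m)) (hcard : S.card = k)
      (hclique : G.IsClique (S : Set (Fin m))) :
      IsKTreeConstr k (m + 1) (extendGraph G S)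

/-- `G` is a partial `k`-tree: a subgraph of some `k`-tree. -/
def IsPartialKTree (k : ℕ) {n : ℕ} (G : SimpleGraph (Fin n)) : Prop :=
  ∃ (m : ℕ) (H : SimpleGraph (Fin m)) (f : Fin n ↪ Fin m),
    IsKTreeConstr k m H ∧ ∀ u v : Fin n, G.Adj u v → H.Adj (f u) (f v)

/-- `T n k`: the number of labeled partial `k`-trees on the vertex set `{1,…,n}`. -/
noncomputable def numPartialKTrees (n k : ℕ) : ℕ :=
  Nat.card {G : SimpleGraph (Fin n) // IsPartialKTree k G}

/-!
Once `n ≥ k + 1`, a partial `k`-tree on `n` vertices is a spanning subgraph of a `k`-tree on the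
same vertices: running the construction of the ambient `k`-tree and keeping only the used
vertices, each kept vertex is re-attached to a `k`-clique extending the image of its old clique.

In a `k`-tree built in the order `0, 1, …`, the attaching clique of a later vertex `a` consists of
its largest member `p` and the attaching clique of `p` with one vertex dropped. Hence a partial
`k`-tree is determined by the initial clique (`≤ n ^ (k + 1)` choices) with its induced graph
(`2 ^ (k (k + 1) / 2)`), and for each of the other `n - k - 1` vertices by `p`, the position of the
dropped vertex and the set of attaching-clique positions that carry edges (`n k 2 ^ k` choices).
This count is the claimed bound divided by `k`.
-/

open Function

theorem extendGraph_adj_castSucc {m : ℕ} {G : SimpleGraph (Fin m)} {S : Finset (Fin m)}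
    {a b : Fin m} : (extendGraph G S).Adj a.castSucc b.castSucc ↔ G.Adj a b := by
  simpa [extendGraph, Fin.castSucc_ne_last, G.adj_comm b a] using fun h => h.ne

theorem extendGraph_adj_last {m : ℕ} {G : SimpleGraph (Fin m)} {S : Finset (Fin m)}
    {b : Fin m} : (extendGraph G S).Adj (Fin.last m) b.castSucc ↔ b ∈ S := by
  simp [extendGraph, Fin.castSucc_ne_last, eq_comm (a := Fin.last m)]

theorem IsKTreeConstr.succ_le {k m : ℕ} {H : SimpleGraph (Fin m)} (h : IsKTreeConstr k m H) :
    k + 1 ≤ m := by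
  induction h <;> omega

theorem exists_update_range_eq {α : Type*} [DecidableEq α] {k : ℕ} {t : Fin k → α} {p : α}
    {S : Finset α} (ht : Injective t) (hp : p ∉ Set.range t) (hS : S.card = k) (hpS : p ∈ S)
    (hsub : ∀ s ∈ S, s ≠ p → s ∈ Set.range t) :
    ∃ d, Injective (update t d p) ∧ Set.range (update t d p) = S := by
  obtain ⟨d, hd⟩ : ∃ d, t d ∉ S := by
    by_contra! h
    have hle := Finset.card_le_card (Finset.insert_subset hpS
      (Finset.image_subset_iff.mpr fun d _ => h d : Finset.univ.image t ⊆ S))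
    rw [Finset.card_insert_of_notMem (by simpa using hp), Finset.card_image_of_injective _ ht,
      Finset.card_univ, Fintype.card_fin, hS] at hle
    omega
  have hinj : Injective (update t d p) := by
    intro i j hij
    simp only [update_apply] at hij
    split_ifs at hij with hi hj hj
    · exact hi.trans hj.symm
    · exact absurd ⟨j, hij.symm⟩ hp
    · exact absurd ⟨i, hij⟩ hp
    · exact ht hij
  refine ⟨d, hinj, ?_⟩
  rw [← Set.image_univ, ← Finset.coe_univ, ← Finset.coe_image, Finset.coe_inj]
  symm
  refine Finset.eq_of_subset_of_card_le (fun s hs => ?_) ?_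
  · rcases eq_or_ne s p with rfl | hsp
    · exact Finset.mem_image.mpr ⟨d, Finset.mem_univ _, update_self ..⟩
    · obtain ⟨j, rfl⟩ := hsub s hs hsp
      have hj : j ≠ d := by rintro rfl; exact hd hs
      exact Finset.mem_image.mpr ⟨j, Finset.mem_univ _, update_of_ne hj ..⟩
  · rw [Finset.card_image_of_injective _ hinj, Finset.card_univ, Fintype.card_fin, hS]

/-- Data of a `k`-tree on `Fin m` whose vertices were added in increasing order: `nbrs a`
enumerates a `k`-clique of neighbours of `a` containing all earlier neighbours; after the initial
clique it is the tuple of `parent a` with entry `slot a` overwritten by `parent a`. -/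
structure BackNbrs (k : ℕ) {m : ℕ} (H : SimpleGraph (Fin m)) where
  nbrs : Fin m → Fin k → Fin m
  parent : Fin m → Fin m
  slot : Fin m → Fin k
  injective_nbrs : ∀ a, Injective (nbrs a)
  adj_nbrs : ∀ a i, H.Adj a (nbrs a i)
  isClique_range_nbrs : ∀ a, H.IsClique (Set.range (nbrs a))
  mem_range_nbrs : ∀ a b, H.Adj a b → b < a → b ∈ Set.range (nbrs a)
  nbrs_castLE : ∀ (h : k + 1 ≤ m) (i : Fin (k + 1)),
    nbrs (Fin.castLE h i) = Fin.castLE h ∘ i.succAbove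
  parent_lt : ∀ a : Fin m, k < a.val → parent a < a
  nbrs_eq_update : ∀ a : Fin m, k < a.val →
    nbrs a = update (nbrs (parent a)) (slot a) (parent a)

namespace BackNbrs

variable {k m : ℕ}

theorem notMem_range_nbrs {H : SimpleGraph (Fin m)} (B : BackNbrs k H) (a : Fin m) :
    a ∉ Set.range (B.nbrs a) := by
  rintro ⟨i, hi⟩
  exact (B.adj_nbrs a i).ne hi.symm

def top (hk : 0 < k) : BackNbrs k (⊤ : SimpleGraph (Fin (k + 1))) where
  nbrs a := a.succAbove
  parent := id
  slot _ := ⟨0, hk⟩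
  injective_nbrs a := Fin.succAbove_right_injective
  adj_nbrs a i := (SimpleGraph.top_adj _ _).mpr (Fin.succAbove_ne a i).symm
  isClique_range_nbrs _ _ _ _ _ hxy := (SimpleGraph.top_adj _ _).mpr hxy
  mem_range_nbrs a b hab _ := by
    rw [Fin.range_succAbove]
    exact hab.ne'
  nbrs_castLE h i := by
    ext j
    simp [Fin.castLE_refl]
  parent_lt a ha := absurd a.isLt (by omega)
  nbrs_eq_update a ha := absurd a.isLt (by omega)

def extend {H : SimpleGraph (Fin m)} (B : BackNbrs k H) (hm : k + 1 ≤ m) {S : Finset (Fin m)}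
    (hSH : H.IsClique (S : Set (Fin m))) (p : Fin m) (d : Fin k)
    (hinj : Injective (update (B.nbrs p) d p)) (hrange : Set.range (update (B.nbrs p) d p) = S) :
    BackNbrs k (extendGraph H S) where
  nbrs := Fin.lastCases (Fin.castSucc ∘ update (B.nbrs p) d p) fun a => Fin.castSucc ∘ B.nbrs a
  parent := Fin.lastCases p.castSucc fun a => (B.parent a).castSucc
  slot := Fin.lastCases d B.slot
  injective_nbrs a := by
    induction a using Fin.lastCases with
    | last => simpa using (Fin.castSucc_injective m).comp hinj
    | cast a => simpa using (Fin.castSucc_injective m).comp (B.injective_nbrs a)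
  adj_nbrs a i := by
    induction a using Fin.lastCases with
    | last =>
      simp only [Fin.lastCases_last, comp_apply, extendGraph_adj_last]
      exact Finset.mem_coe.mp (hrange ▸ Set.mem_range_self i)
    | cast a => simpa [extendGraph_adj_castSucc] using B.adj_nbrs a i
  isClique_range_nbrs a := by
    have hcast : ∀ f : Fin k → Fin m, H.IsClique (Set.range f) →
        (extendGraph H S).IsClique (Set.range (Fin.castSucc ∘ f)) := by
      rintro f hf _ ⟨i, rfl⟩ _ ⟨j, rfl⟩ hij
      exact extendGraph_adj_castSucc.mpr (hf ⟨i, rfl⟩ ⟨j, rfl⟩ fun h => hij (by simp [h]))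
    induction a using Fin.lastCases with
    | last => simpa using hcast _ (hrange ▸ hSH)
    | cast a => simpa using hcast _ (B.isClique_range_nbrs a)
  mem_range_nbrs a b hab hba := by
    induction a using Fin.lastCases with
    | last =>
      induction b using Fin.lastCases with
      | last => exact absurd hba (lt_irrefl _)
      | cast b =>
        rw [extendGraph_adj_last] at hab
        simpa [Set.range_comp, hrange] using hab
    | cast a =>
      induction b using Fin.lastCases with
      | last => exact absurd hba (Fin.castSucc_lt_last a).not_gt
      | cast b =>
        obtain ⟨i, hi⟩ := B.mem_range_nbrs a b (extendGraph_adj_castSucc.mp hab)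
          (Fin.castSucc_lt_castSucc_iff.mp hba)
        exact ⟨i, by simp [hi]⟩
  nbrs_castLE h i := by
    have hi : Fin.castLE h i = (Fin.castLE hm i).castSucc := by ext; simp
    rw [hi, Fin.lastCases_castSucc, B.nbrs_castLE hm]
    ext j
    simp
  parent_lt a ha := by
    induction a using Fin.lastCases with
    | last => simp
    | cast a => simpa using B.parent_lt a (by simpa using ha)
  nbrs_eq_update a ha := by
    induction a using Fin.lastCases with
    | last => simp [comp_update]
    | cast a => simp [B.nbrs_eq_update a (by simpa using ha), comp_update]

/-- The parent of the new vertex is the last member `p` of `S`: the other members are earlier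
neighbours of `p`, hence entries of its tuple, and exactly one entry of that tuple is not in `S`. -/
theorem nonempty_extendGraph {H : SimpleGraph (Fin m)} (B : BackNbrs k H) (hk : 0 < k)
    (hm : k + 1 ≤ m) {S : Finset (Fin m)} (hS : S.card = k) (hSH : H.IsClique (S : Set (Fin m))) :
    Nonempty (BackNbrs k (extendGraph H S)) := by
  have hne : S.Nonempty := Finset.card_pos.mp (hS ▸ hk)
  obtain ⟨d, hinj, hrange⟩ := exists_update_range_eq (B.injective_nbrs (S.max' hne))
    (B.notMem_range_nbrs _) hS (S.max'_mem hne) fun s hs hsp =>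
      B.mem_range_nbrs _ s (hSH (S.max'_mem hne) hs hsp.symm)
        (lt_of_le_of_ne (S.le_max' s hs) hsp)
  exact ⟨B.extend hm hSH _ d hinj hrange⟩

end BackNbrs

theorem IsKTreeConstr.nonempty_backNbrs {k m : ℕ} {H : SimpleGraph (Fin m)} (hk : 0 < k)
    (h : IsKTreeConstr k m H) : Nonempty (BackNbrs k H) := by
  induction h with
  | base => exact ⟨BackNbrs.top hk⟩
  | step hG S hS hSH ih => exact ih.some.nonempty_extendGraph hk hG.succ_le hS hSH

theorem BackNbrs.exists_isClique_superset {k m : ℕ} {H : SimpleGraph (Fin m)} (B : BackNbrs k H)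
    (hm : 0 < m) {C : Finset (Fin m)} (hC : H.IsClique (C : Set (Fin m))) (hCk : C.card ≤ k) :
    ∃ D, C ⊆ D ∧ H.IsClique (D : Set (Fin m)) ∧ D.card = k := by
  classical
  obtain ⟨a, ha⟩ : ∃ a, ∀ c ∈ C, c = a ∨ (c < a ∧ H.Adj a c) := by
    rcases C.eq_empty_or_nonempty with rfl | hne
    · exact ⟨⟨0, hm⟩, by simp⟩
    · refine ⟨C.max' hne, fun c hc => or_iff_not_imp_left.mpr fun hca => ?_⟩
      exact ⟨lt_of_le_of_ne (C.le_max' c hc) hca, hC (C.max'_mem hne) hc (Ne.symm hca)⟩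
  set K := insert a (Finset.univ.image (B.nbrs a))
  have hCK : C ⊆ K := fun c hc => by
    rcases ha c hc with rfl | ⟨hca, hac⟩
    · exact Finset.mem_insert_self _ _
    · obtain ⟨i, rfl⟩ := B.mem_range_nbrs a c hac hca
      exact Finset.mem_insert_of_mem (Finset.mem_image_of_mem _ (Finset.mem_univ i))
  have hK : H.IsClique (K : Set (Fin m)) := by
    simp only [K, Finset.coe_insert, Finset.coe_image, Finset.coe_univ, Set.image_univ,
      SimpleGraph.isClique_insert]
    exact ⟨B.isClique_range_nbrs a, by rintro _ ⟨i, rfl⟩ -; exact B.adj_nbrs a i⟩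
  have hKcard : K.card = k + 1 := by
    rw [Finset.card_insert_of_notMem (by simpa using B.notMem_range_nbrs a),
      Finset.card_image_of_injective _ (B.injective_nbrs a), Finset.card_univ, Fintype.card_fin]
  obtain ⟨D, hCD, hDK, hD⟩ := Finset.exists_subsuperset_card_eq hCK hCk (by omega)
  exact ⟨D, hCD, hK.subset (Finset.coe_subset.mpr hDK), hD⟩

def EmbedsInKTree (k : ℕ) {m : ℕ} (H : SimpleGraph (Fin m)) (A : Finset (Fin m)) (n : ℕ) :
    Prop :=
  ∃ H' : SimpleGraph (Fin n), IsKTreeConstr k n H' ∧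
    ∃ g : Fin m → Fin n, Set.InjOn g A ∧
      ∀ u ∈ A, ∀ v ∈ A, H.Adj u v → H'.Adj (g u) (g v)

namespace EmbedsInKTree

variable {k m n : ℕ}

theorem of_card_eq_succ (H : SimpleGraph (Fin m)) {A : Finset (Fin m)} (hA : A.card = k + 1) :
    EmbedsInKTree k H A (k + 1) := by
  classical
  let g : Fin m → Fin (k + 1) := fun u =>
    if h : u ∈ A then Fin.cast hA (A.equivFin ⟨u, h⟩) else 0
  have hg : Set.InjOn g A := by
    intro u hu v hv huv
    simp only [g, dif_pos (Finset.mem_coe.mp hu), dif_pos (Finset.mem_coe.mp hv), Fin.cast_inj,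
      Equiv.apply_eq_iff_eq, Subtype.mk.injEq] at huv
    exact huv
  exact ⟨⊤, .base, g, hg, fun u hu v hv huv =>
    (SimpleGraph.top_adj _ _).mpr fun h => huv.ne (hg hu hv h)⟩

theorem extendGraph_of_last_notMem {G : SimpleGraph (Fin m)} {S : Finset (Fin m)}
    {A : Finset (Fin (m + 1))} (hl : Fin.last m ∉ A)
    (h : EmbedsInKTree k G (Finset.univ.filter fun a => a.castSucc ∈ A) n) :
    EmbedsInKTree k (extendGraph G S) A n := by
  obtain ⟨H', hH', g, hinj, hadj⟩ := h
  have hcast : ∀ u ∈ A, ∃ u' : Fin m, u = u'.castSucc ∧ u'.castSucc ∈ A := fun u hu =>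
    ⟨u.castPred (ne_of_mem_of_not_mem hu hl), by simp, by simpa using hu⟩
  refine ⟨H', hH', Fin.lastCases ⟨0, by have := hH'.succ_le; omega⟩ g, ?_, ?_⟩
  · intro u hu v hv huv
    obtain ⟨u, rfl, hu⟩ := hcast u hu
    obtain ⟨v, rfl, hv⟩ := hcast v hv
    simp only [Fin.lastCases_castSucc] at huv
    rw [hinj (by simpa using hu) (by simpa using hv) huv]
  · intro u hu v hv huv
    obtain ⟨u, rfl, hu⟩ := hcast u hu
    obtain ⟨v, rfl, hv⟩ := hcast v hv
    simpa using hadj u (by simpa using hu) v (by simpa using hv) (extendGraph_adj_castSucc.mp huv)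

theorem injOn_lastCases_castSucc {g : Fin m → Fin n} {A : Finset (Fin (m + 1))}
    (hg : Set.InjOn g (Finset.univ.filter fun a : Fin m => a.castSucc ∈ A)) :
    Set.InjOn (Fin.lastCases (Fin.last n) fun u => (g u).castSucc) A := by
  intro u hu v hv huv
  induction u using Fin.lastCases with
  | last =>
    induction v using Fin.lastCases with
    | last => rfl
    | cast v =>
      simp only [Fin.lastCases_last, Fin.lastCases_castSucc] at huv
      exact absurd huv.symm (Fin.castSucc_ne_last _)
  | cast u =>
    induction v using Fin.lastCases with
    | last =>
      simp only [Fin.lastCases_last, Fin.lastCases_castSucc] at huv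
      exact absurd huv (Fin.castSucc_ne_last _)
    | cast v =>
      simp only [Fin.lastCases_castSucc, Fin.castSucc_inj] at huv
      rw [hg (by simpa using hu) (by simpa using hv) huv]

theorem extendGraph_of_last_mem (hk : 0 < k) {G : SimpleGraph (Fin m)} {S : Finset (Fin m)}
    (hS : S.card = k) (hSG : G.IsClique (S : Set (Fin m))) {A : Finset (Fin (m + 1))}
    (h : EmbedsInKTree k G (Finset.univ.filter fun a => a.castSucc ∈ A) n) :
    EmbedsInKTree k (extendGraph G S) A (n + 1) := by
  obtain ⟨H', hH', g, hinj, hadj⟩ := h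
  obtain ⟨B⟩ := hH'.nonempty_backNbrs hk
  set C := (S.filter fun s => s.castSucc ∈ A).image g
  have hC : H'.IsClique (C : Set (Fin n)) := by
    intro _ hx _ hy hxy
    simp only [C, Finset.coe_image, Finset.coe_filter, Set.mem_image] at hx hy
    obtain ⟨x, ⟨hxS, hxA⟩, rfl⟩ := hx
    obtain ⟨y, ⟨hyS, hyA⟩, rfl⟩ := hy
    exact hadj x (by simpa using hxA) y (by simpa using hyA)
      (hSG hxS hyS fun h => hxy (by rw [h]))
  obtain ⟨D, hCD, hD, hDk⟩ := B.exists_isClique_superset (by have := hH'.succ_le; omega) hC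
    (Finset.card_image_le.trans ((Finset.card_filter_le _ _).trans hS.le))
  have hlast : ∀ v : Fin m, v.castSucc ∈ A → (extendGraph G S).Adj (Fin.last m) v.castSucc →
      (extendGraph H' D).Adj (Fin.last n) (g v).castSucc := by
    intro v hv hadjv
    rw [extendGraph_adj_last] at hadjv ⊢
    exact hCD (Finset.mem_image_of_mem g (Finset.mem_filter.mpr ⟨hadjv, hv⟩))
  refine ⟨extendGraph H' D, hH'.step D hDk hD, Fin.lastCases (Fin.last n) fun u => (g u).castSucc,
    ?_, ?_⟩
  · exact injOn_lastCases_castSucc hinj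
  · intro u hu v hv huv
    induction u using Fin.lastCases with
    | last =>
      induction v using Fin.lastCases with
      | last => exact absurd rfl huv.ne
      | cast v => simpa using hlast v hv huv
    | cast u =>
      induction v using Fin.lastCases with
      | last => simpa using (hlast u hu huv.symm).symm
      | cast v =>
        simpa [extendGraph_adj_castSucc] using
          hadj u (by simpa using hu) v (by simpa using hv) (extendGraph_adj_castSucc.mp huv)

theorem card_filter_castSucc_mem (A : Finset (Fin (m + 1))) :
    (Finset.univ.filter fun a : Fin m => a.castSucc ∈ A).card = (A.erase (Fin.last m)).card := by
  rw [← Finset.card_map Fin.castSuccEmb]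
  congr 1
  ext u
  induction u using Fin.lastCases <;> simp [Fin.castSucc_ne_last]

end EmbedsInKTree

theorem IsKTreeConstr.embedsInKTree {k m n : ℕ} {H : SimpleGraph (Fin m)} (hk : 0 < k)
    (h : IsKTreeConstr k m H) {A : Finset (Fin m)} (hA : A.card = n) (hn : k + 1 ≤ n) :
    EmbedsInKTree k H A n := by
  induction h generalizing n with
  | base =>
    obtain rfl : n = k + 1 := le_antisymm (by simpa [hA] using A.card_le_univ) hn
    exact .of_card_eq_succ _ hA
  | step _ S hS hSG ih =>
    rcases hn.eq_or_lt with rfl | hn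
    · exact .of_card_eq_succ _ hA
    by_cases hl : Fin.last _ ∈ A
    · obtain ⟨n, rfl⟩ : ∃ n', n = n' + 1 := ⟨n - 1, by omega⟩
      refine .extendGraph_of_last_mem hk hS hSG (ih ?_ (by omega))
      rw [EmbedsInKTree.card_filter_castSucc_mem, Finset.card_erase_of_mem hl, hA,
        Nat.add_sub_cancel]
    · refine .extendGraph_of_last_notMem hl (ih ?_ hn.le)
      rw [EmbedsInKTree.card_filter_castSucc_mem, Finset.erase_eq_of_notMem hl, hA]

theorem IsPartialKTree.exists_perm_le_kTree {k n : ℕ} {G : SimpleGraph (Fin n)} (hk : 0 < k)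
    (hn : k + 1 ≤ n) (hG : IsPartialKTree k G) :
    ∃ H : SimpleGraph (Fin n), IsKTreeConstr k n H ∧
      ∃ σ : Fin n ≃ Fin n, ∀ u v, G.Adj u v → H.Adj (σ u) (σ v) := by
  obtain ⟨m, H, f, hH, hGH⟩ := hG
  obtain ⟨H', hH', g, hg, hadj⟩ := hH.embedsInKTree hk (A := Finset.univ.map f) (by simp) hn
  have hinj : Injective (g ∘ f) := fun u v h => f.injective (hg (by simp) (by simp) h)
  exact ⟨H', hH', Equiv.ofBijective _ (Finite.injective_iff_bijective.mp hinj),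
    fun u v huv => hadj _ (by simp) _ (by simp) (hGH u v huv)⟩

/-- The data of `BackNbrs` for a `k`-tree containing `G`, in the labels of `G`; `rank` is the
position in the construction order. -/
structure KTreeCert (k : ℕ) {n : ℕ} (G : SimpleGraph (Fin n)) where
  base : Fin (k + 1) ↪ Fin n
  nbrs : Fin n → Fin k → Fin n
  parent : Fin n → Fin n
  slot : Fin n → Fin k
  rank : Fin n → ℕ
  nbrs_base : ∀ i, nbrs (base i) = base ∘ i.succAbove
  nbrs_eq_update : ∀ u ∉ Set.range base, nbrs u = update (nbrs (parent u)) (slot u) (parent u)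
  rank_parent_lt : ∀ u ∉ Set.range base, rank (parent u) < rank u
  mem_range_nbrs_of_adj : ∀ u v, G.Adj u v →
    v ∈ Set.range (nbrs u) ∨ u ∈ Set.range (nbrs v)

theorem IsPartialKTree.nonempty_kTreeCert {k n : ℕ} {G : SimpleGraph (Fin n)} (hk : 0 < k)
    (hn : k + 1 ≤ n) (hG : IsPartialKTree k G) : Nonempty (KTreeCert k G) := by
  obtain ⟨H, hH, σ, hGH⟩ := hG.exists_perm_le_kTree hk hn
  obtain ⟨B⟩ := hH.nonempty_backNbrs hk
  set base := (Fin.castLEEmb hn).trans σ.symm.toEmbedding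
  have hbase : ∀ u ∉ Set.range base, k < (σ u).val := by
    intro u hu
    by_contra! h
    exact hu ⟨⟨(σ u).val, by omega⟩, by simp [base]⟩
  refine ⟨{
    base := base
    nbrs := fun u => σ.symm ∘ B.nbrs (σ u)
    parent := fun u => σ.symm (B.parent (σ u))
    slot := fun u => B.slot (σ u)
    rank := fun u => σ u
    nbrs_base := fun i => by ext j; simp [base, B.nbrs_castLE hn]
    nbrs_eq_update := fun u hu => by simp [B.nbrs_eq_update _ (hbase u hu), comp_update]
    rank_parent_lt := fun u hu => by simpa using B.parent_lt _ (hbase u hu)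
    mem_range_nbrs_of_adj := fun u v huv => ?_ }⟩
  have hσ := hGH u v huv
  rcases lt_or_gt_of_ne hσ.ne with h | h
  · obtain ⟨i, hi⟩ := B.mem_range_nbrs _ _ hσ.symm h
    exact .inr ⟨i, by simp [hi]⟩
  · obtain ⟨i, hi⟩ := B.mem_range_nbrs _ _ hσ h
    exact .inl ⟨i, by simp [hi]⟩

/-- The initial clique `B` with the graph it induces, and for every other vertex its parent, its
slot and the set of positions in its tuple that carry edges. -/
abbrev KTreeCode (n k : ℕ) : Type :=
  Σ B : Fin (k + 1) ↪ Fin n,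
    SimpleGraph (Fin (k + 1)) ×
      (((Set.range B)ᶜ : Set (Fin n)) → Fin n × Fin k × Set (Fin k))

namespace KTreeCode

variable {n k : ℕ}

open Classical in
noncomputable def entry (c : KTreeCode n k) (u : Fin n) : Option (Fin n × Fin k × Set (Fin k)) :=
  if hu : u ∈ Set.range c.1 then none else some (c.2.2 ⟨u, hu⟩)

def Arc (c : KTreeCode n k) (nbrs : Fin n → Fin k → Fin n) (u v : Fin n) : Prop :=
  (∃ i j, c.1 i = u ∧ c.1 j = v ∧ c.2.1.Adj i j) ∨
    ∃ e, c.entry u = some e ∧ ∃ i ∈ e.2.2, nbrs u i = v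

def decode (c : KTreeCode n k) (nbrs : Fin n → Fin k → Fin n) : SimpleGraph (Fin n) :=
  SimpleGraph.fromRel (c.Arc nbrs)

end KTreeCode

namespace KTreeCert

variable {k n : ℕ} {G : SimpleGraph (Fin n)}

def code (W : KTreeCert k G) : KTreeCode n k :=
  ⟨W.base, G.comap W.base, fun u => (W.parent u, W.slot u, {i | G.Adj u (W.nbrs u i)})⟩

theorem entry_code (W : KTreeCert k G) {u : Fin n} (hu : u ∉ Set.range W.base) :
    W.code.entry u = some (W.parent u, W.slot u, {i | G.Adj u (W.nbrs u i)}) := by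
  simp [KTreeCode.entry, code, hu]

theorem arc_code_nbrs (W : KTreeCert k G) {u : Fin n} {i : Fin k} (h : G.Adj u (W.nbrs u i)) :
    W.code.Arc W.nbrs u (W.nbrs u i) := by
  by_cases hu : u ∈ Set.range W.base
  · obtain ⟨a, rfl⟩ := hu
    refine .inl ⟨a, a.succAbove i, rfl, by simp [code, W.nbrs_base], ?_⟩
    simpa [code, W.nbrs_base] using h
  · exact .inr ⟨_, W.entry_code hu, i, h, rfl⟩

theorem adj_of_arc_code (W : KTreeCert k G) {u v : Fin n} (h : W.code.Arc W.nbrs u v) :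
    G.Adj u v := by
  rcases h with ⟨i, j, rfl, rfl, hij⟩ | ⟨e, he, i, hi, rfl⟩
  · exact hij
  · by_cases hu : u ∈ Set.range W.base
    · simp [KTreeCode.entry, code, hu] at he
    · rw [W.entry_code hu, Option.some_inj] at he
      subst he
      exact hi

theorem decode_code (W : KTreeCert k G) : W.code.decode W.nbrs = G := by
  ext u v
  simp only [KTreeCode.decode, SimpleGraph.fromRel_adj]
  refine ⟨fun ⟨_, h⟩ => h.elim W.adj_of_arc_code fun h => (W.adj_of_arc_code h).symm,
    fun h => ⟨h.ne, ?_⟩⟩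
  rcases W.mem_range_nbrs_of_adj u v h with ⟨i, rfl⟩ | ⟨i, rfl⟩
  · exact .inl (W.arc_code_nbrs h)
  · exact .inr (W.arc_code_nbrs h.symm)

/-- The tuples `nbrs` are recovered from the code by recursion along `parent`. -/
theorem nbrs_eq_of_code_eq {G' : SimpleGraph (Fin n)} (W : KTreeCert k G) (W' : KTreeCert k G')
    (h : W.code = W'.code) : W.nbrs = W'.nbrs := by
  have hB : W.base = W'.base := congrArg Sigma.fst h
  have hstep : ∀ u ∉ Set.range W.base, W.parent u = W'.parent u ∧ W.slot u = W'.slot u := by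
    intro u hu
    have he := congrArg (KTreeCode.entry · u) h
    simp only [W.entry_code hu, W'.entry_code (hB ▸ hu), Option.some_inj, Prod.mk.injEq] at he
    exact ⟨he.1, he.2.1⟩
  funext u
  induction hr : W.rank u using Nat.strong_induction_on generalizing u with
  | _ r ih =>
    by_cases hu : u ∈ Set.range W.base
    · obtain ⟨i, rfl⟩ := hu
      rw [W.nbrs_base, hB, W'.nbrs_base]
    · rw [W.nbrs_eq_update u hu, W'.nbrs_eq_update u (hB ▸ hu), ← (hstep u hu).1,
        ← (hstep u hu).2, ih _ (hr ▸ W.rank_parent_lt u hu) _ rfl]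

theorem eq_of_code_eq {G' : SimpleGraph (Fin n)} (W : KTreeCert k G) (W' : KTreeCert k G')
    (h : W.code = W'.code) : G = G' := by
  rw [← W.decode_code, ← W'.decode_code, h, nbrs_eq_of_code_eq W W' h]

end KTreeCert

theorem numPartialKTrees_le_card_kTreeCode {n k : ℕ} (hk : 0 < k) (hn : k + 1 ≤ n) :
    numPartialKTrees n k ≤ Nat.card (KTreeCode n k) := by
  let W (G : {G : SimpleGraph (Fin n) // IsPartialKTree k G}) : KTreeCert k G.1 :=
    (G.2.nonempty_kTreeCert hk hn).some
  exact Nat.card_le_card_of_injective (fun G => (W G).code)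
    fun G G' h => Subtype.ext (KTreeCert.eq_of_code_eq _ _ h)

theorem SimpleGraph.natCard_le_two_pow_choose (V : Type*) [Finite V] :
    Nat.card (SimpleGraph V) ≤ 2 ^ (Nat.card V).choose 2 := by
  classical
  have := Fintype.ofFinite V
  rw [← Sym2.natCard_subtype_not_diag]
  calc Nat.card (SimpleGraph V) ≤ Nat.card (Set {e : Sym2 V // ¬e.IsDiag}) := by
        refine Nat.card_le_card_of_injective (fun G => {e | e.1 ∈ G.edgeSet}) fun G G' h => ?_
        rw [← SimpleGraph.edgeSet_inj]
        ext e
        by_cases he : e.IsDiag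
        · exact iff_of_false (fun h => G.not_isDiag_of_mem_edgeSet h he)
            (fun h => G'.not_isDiag_of_mem_edgeSet h he)
        · exact Set.ext_iff.mp h ⟨e, he⟩
    _ = 2 ^ Nat.card {e : Sym2 V // ¬e.IsDiag} := by
        rw [Nat.card_eq_fintype_card, Nat.card_eq_fintype_card, Fintype.card_set]

theorem KTreeCode.natCard_le (n k : ℕ) :
    Nat.card (KTreeCode n k) ≤
      n ^ (k + 1) * (2 ^ (k + 1).choose 2 * (n * k * 2 ^ k) ^ (n - (k + 1))) := by
  rw [Nat.card_sigma]
  calc _ ≤ ∑ _B : Fin (k + 1) ↪ Fin n,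
        2 ^ (k + 1).choose 2 * (n * k * 2 ^ k) ^ (n - (k + 1)) := by
        refine Finset.sum_le_sum fun B _ => ?_
        rw [Nat.card_prod, Nat.card_fun, Nat.card_coe_set_eq, Set.ncard_compl,
          Set.ncard_range_of_injective B.injective, Nat.card_prod, Nat.card_prod]
        simp only [Nat.card_eq_fintype_card, Fintype.card_fin, Fintype.card_set, ← mul_assoc]
        gcongr
        simpa using SimpleGraph.natCard_le_two_pow_choose (Fin (k + 1))
    _ ≤ _ := by
        rw [Finset.sum_const, Finset.card_univ, smul_eq_mul, Fintype.card_embedding_eq]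
        gcongr
        simpa using Nat.descFactorial_le_pow n (k + 1)

theorem KTreeCode.natCard_mul_le {n k : ℕ} (hk : 0 < k) (hn : k + 1 ≤ n) :
    Nat.card (KTreeCode n k) * (2 ^ (k * (k + 1) / 2) * k ^ k) ≤ (k * 2 ^ k * n) ^ n := by
  refine (Nat.mul_le_mul_right _ (natCard_le n k)).trans ?_
  set T := k * (k + 1) / 2
  have hT : (k + 1).choose 2 = T := by rw [Nat.choose_two_right, Nat.add_sub_cancel, mul_comm]
  have h2T : 2 ^ T * 2 ^ T = 2 ^ (k * (k + 1)) := by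
    rw [← pow_add, ← two_mul, Nat.mul_div_cancel' (Nat.even_mul_succ_self k).two_dvd]
  have hsplit : (k * 2 ^ k * n) ^ n =
      (k * 2 ^ k * n) ^ (k + 1) * (k * 2 ^ k * n) ^ (n - (k + 1)) := by
    rw [← pow_add, Nat.add_sub_cancel' hn]
  rw [hT, hsplit]
  calc _ ≤ n ^ (k + 1) * (2 ^ T * (n * k * 2 ^ k) ^ (n - (k + 1))) * (2 ^ T * k ^ k) * k :=
        Nat.le_mul_of_pos_right _ hk
    _ = n ^ (k + 1) * (2 ^ T * 2 ^ T) * k ^ (k + 1) * (n * k * 2 ^ k) ^ (n - (k + 1)) := by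
        ring
    _ = _ := by rw [h2T]; ring

theorem numPartialKTrees_upper'_general (n k : ℕ) (hk : 0 < k) (hn : k + 2 ≤ n) :
    (numPartialKTrees n k : ℝ) ≤
      ((k : ℝ) * 2 ^ k * n) ^ n * (2 : ℝ) ^ (-((k * (k + 1) / 2 : ℕ) : ℤ)) *
        (k : ℝ) ^ (-(k : ℤ)) := by
  have hcount : numPartialKTrees n k * (2 ^ (k * (k + 1) / 2) * k ^ k) ≤ (k * 2 ^ k * n) ^ n :=
    (Nat.mul_le_mul_right _ (numPartialKTrees_le_card_kTreeCode hk (by omega))).trans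
      (KTreeCode.natCard_mul_le hk (by omega))
  rw [zpow_neg, zpow_neg, zpow_natCast, zpow_natCast, mul_assoc, ← mul_inv, ← div_eq_mul_inv,
    le_div_iff₀ (by positivity)]
  exact_mod_cast hcount

/-- For `0 < k ≤ n` with `n ≥ k+2`, the number of labeled partial `k`-trees on `{1,…,n}`
is at most `(k · 2^k · n)^n · 2^(−k(k+1)/2) · k^(−k)`. -/
theorem numPartialKTrees_upper' (n k : ℕ) (hk : 0 < k) (hkn : k ≤ n) (hn : k + 2 ≤ n) :
    (numPartialKTrees n k : ℝ) ≤
      ((k : ℝ) * 2 ^ k * n) ^ n * (2 : ℝ) ^ (-((k * (k + 1) / 2 : ℕ) : ℤ)) *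
        (k : ℝ) ^ (-(k : ℤ)) :=
  numPartialKTrees_upper'_general n k hk hn
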